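/- For every n ≥ 1, the monoid OCI_n has rank n; that is, OCI_n is generated as a monoid by some set of n elements, and every generating set of OCI_n contains at least n elements. -/

import Mathlib

/-!
Common setup.  `Ω_n = {1, …, n}` is modelled by `Fin n`, where `a : Fin n`
represents the element `a + 1` of `Ω_n`.  Partial maps on `Ω_n` are modelled as
functions `Fin n → Option (Fin n)`, composed left-to-right (as in the paper),
which makes them a monoid (the monoid `PT_n` of all partial transformations).
-/

/-- Partial maps on `Ω_n`, composed left-to-right. -/
abbrev PMap (n : ℕ) := Fin n → Option (Fin n)

instance PMap.instMonoid (n : ℕ) : Monoid (PMap n) where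
  one := fun a => some a
  mul f g := fun a => (f a).bind g
  one_mul f := rfl
  mul_one f := funext fun a => by
    show (f a).bind (fun b => some b) = f a
    cases f a <;> rfl
  mul_assoc f g h := funext fun a => by
    show ((f a).bind g).bind h = (f a).bind (fun b => (g b).bind h)
    cases f a <;> rfl

/-- The cyclic permutation `g : i ↦ i + 1` (for `1 ≤ i ≤ n-1`), `n ↦ 1`, of `Ω_n`,
as a (total) partial map. -/
def gmap (n : ℕ) : PMap n := fun a => some (finRotate n a)

/-- `emap n i` is the partial identity on `Ω_n ∖ {i}` (the map `e_i` of the paper);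
recall that `a : Fin n` represents the element `a + 1` of `Ω_n = {1, …, n}`. -/
def emap (n i : ℕ) : PMap n := fun a => if (a : ℕ) + 1 = i then none else some a

/-- The cyclic inverse monoid `CI_n`, as the set of all restrictions of elements of
`C_n = {1, g, g², …}` (including the empty map). -/
def CIn (n : ℕ) : Set (PMap n) :=
  {f | ∃ k : ℕ, ∀ a : Fin n, f a ≠ none → f a = (gmap n ^ k) a}

/-- A partial map is order-preserving if it preserves `≤` on its domain. -/
def OrdPres {n : ℕ} (f : PMap n) : Prop :=
  ∀ a b c d : Fin n, a ≤ b → f a = some c → f b = some d → c ≤ d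

/-- `OCI_n`: the order-preserving elements of `CI_n`. -/
def OCIn (n : ℕ) : Set (PMap n) := {f | f ∈ CIn n ∧ OrdPres f}

/-- `x = g e_1`, the partial map with domain `{1, …, n-1}` sending `i ↦ i + 1`. -/
def xmap (n : ℕ) : PMap n := gmap n * emap n 1

/-- `y = x⁻¹`, the partial map with domain `{2, …, n}` sending `i ↦ i - 1`. -/
def ymap (n : ℕ) : PMap n := fun a =>
  if 1 ≤ (a : ℕ) then some ⟨(a : ℕ) - 1, Nat.lt_of_le_of_lt (Nat.sub_le _ _) a.isLt⟩ else none

-- basic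
lemma pmul_apply {n : ℕ} (f h : PMap n) (a : Fin n) : (f * h) a = (f a).bind h := rfl
lemma pone_apply {n : ℕ} (a : Fin n) : (1 : PMap n) a = some a := rfl

lemma finRotate_val {n : ℕ} (a : Fin n) : ((finRotate n a) : ℕ) = ((a : ℕ) + 1) % n := by
  cases n with
  | zero => exact a.elim0
  | succ m =>
    rw [finRotate_succ_apply, Fin.val_add, Fin.val_one']
    conv_rhs => rw [Nat.add_mod, Nat.mod_eq_of_lt a.isLt]

lemma gpow_apply {n : ℕ} (k : ℕ) (a : Fin n) :
    (gmap n ^ k) a = some ⟨((a : ℕ) + k) % n, Nat.mod_lt _ a.pos⟩ := by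
  induction k with
  | zero =>
    rw [pow_zero, pone_apply]
    congr 1
    ext
    simp [Nat.mod_eq_of_lt a.isLt]
  | succ k ih =>
    rw [pow_succ, pmul_apply, ih]
    show some (finRotate n _) = _
    congr 1
    ext
    rw [finRotate_val]
    show (((a : ℕ) + k) % n + 1) % n = ((a : ℕ) + (k+1)) % n
    rw [← Nat.add_assoc]
    conv_rhs => rw [Nat.add_mod]
    conv_lhs => rw [Nat.add_mod]
    simp [Nat.mod_mod_of_dvd]

lemma xmap_apply {n : ℕ} (a : Fin n) :
    xmap n a = if h : (a : ℕ) + 1 < n then some ⟨(a : ℕ) + 1, h⟩ else none := by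
  show (some (finRotate n a)).bind (emap n 1) = _
  rw [Option.bind_some]
  unfold emap
  rcases Nat.lt_or_ge ((a : ℕ) + 1) n with h | h
  · rw [dif_pos h]
    have hv : ((finRotate n a : Fin n) : ℕ) = (a : ℕ) + 1 := by
      rw [finRotate_val, Nat.mod_eq_of_lt h]
    rw [if_neg, Option.some_inj]
    · ext; exact hv
    · rw [hv]; omega
  · have hv : ((finRotate n a : Fin n) : ℕ) = 0 := by
      rw [finRotate_val]
      have := a.isLt
      have : (a : ℕ) + 1 = n := by omega
      simp [this]
    rw [dif_neg (by omega), if_pos (by rw [hv])]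

lemma xpow_apply {n : ℕ} (k : ℕ) (a : Fin n) :
    (xmap n ^ k) a = if h : (a : ℕ) + k < n then some ⟨(a : ℕ) + k, h⟩ else none := by
  induction k with
  | zero =>
    rw [pow_zero, pone_apply, dif_pos (by simp [a.isLt])]
    rfl
  | succ k ih =>
    rw [pow_succ, pmul_apply, ih]
    rcases Nat.lt_or_ge ((a : ℕ) + k) n with h | h
    · rw [dif_pos h, Option.bind_some, xmap_apply]
      by_cases h2 : (a : ℕ) + (k + 1) < n
      · rw [dif_pos (show ((⟨(a:ℕ)+k, h⟩ : Fin n) : ℕ) + 1 < n from by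
          show (a:ℕ) + k + 1 < n; omega), dif_pos h2, Option.some_inj]
        ext
        show (a : ℕ) + k + 1 = (a : ℕ) + (k+1)
        omega
      · rw [dif_neg (show ¬ (((⟨(a:ℕ)+k, h⟩ : Fin n) : ℕ) + 1 < n) from by
          show ¬ ((a:ℕ) + k + 1 < n); omega), dif_neg h2]
    · rw [dif_neg (by omega), dif_neg (by omega), Option.bind_none]

lemma ypow_apply {n : ℕ} (k : ℕ) (a : Fin n) :
    (ymap n ^ k) a = if h : k ≤ (a : ℕ) then
      some ⟨(a : ℕ) - k, Nat.lt_of_le_of_lt (Nat.sub_le _ _) a.isLt⟩ else none := by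
  induction k with
  | zero =>
    rw [pow_zero, pone_apply, dif_pos (Nat.zero_le _)]
    rfl
  | succ k ih =>
    rw [pow_succ, pmul_apply, ih]
    rcases Nat.lt_or_ge (a : ℕ) (k+1) with h | h
    · by_cases h2 : k ≤ (a : ℕ)
      · rw [dif_pos h2, Option.bind_some, dif_neg (by omega)]
        show ymap n _ = none
        unfold ymap
        rw [if_neg (by show ¬ 1 ≤ (a:ℕ) - k; omega)]
      · rw [dif_neg h2, dif_neg (by omega), Option.bind_none]
    · rw [dif_pos (by omega), Option.bind_some, dif_pos h]
      show ymap n _ = _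
      unfold ymap
      rw [if_pos (by show 1 ≤ (a:ℕ) - k; omega), Option.some_inj]
      ext; show (a:ℕ) - k - 1 = (a:ℕ) - (k+1); omega

def pid {n : ℕ} (S : Finset (Fin n)) : PMap n := fun a => if a ∈ S then some a else none

lemma pid_univ {n : ℕ} : pid (Finset.univ : Finset (Fin n)) = 1 := by
  funext a; show (if _ then _ else _) = _; rw [if_pos (Finset.mem_univ a)]; rfl

-- membership lemmas
lemma one_mem_OCIn {n : ℕ} : (1 : PMap n) ∈ OCIn n := by
  refine ⟨⟨0, fun a _ => ?_⟩, fun a b c d hab hc hd => ?_⟩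
  · rw [pow_zero]
  · rw [pone_apply, Option.some_inj] at hc hd; rw [← hc, ← hd]; exact hab

lemma mul_mem_OCIn {n : ℕ} {f h : PMap n} (hf : f ∈ OCIn n) (hh : h ∈ OCIn n) :
    f * h ∈ OCIn n := by
  obtain ⟨⟨kf, hkf⟩, hof⟩ := hf
  obtain ⟨⟨kh, hkh⟩, hoh⟩ := hh
  constructor
  · refine ⟨kf + kh, fun a ha => ?_⟩
    rw [pmul_apply] at ha ⊢
    rcases hb : f a with _ | b
    · rw [hb] at ha; simp at ha
    · rw [hb] at ha
      rw [Option.bind_some] at ha ⊢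
      have h1 : f a = (gmap n ^ kf) a := hkf a (by rw [hb]; simp)
      rw [gpow_apply] at h1
      have h2 : h b = (gmap n ^ kh) b := hkh b ha
      rw [gpow_apply] at h2
      rw [h2, gpow_apply]
      congr 1
      ext
      show ((b:ℕ) + kh) % n = ((a:ℕ) + (kf + kh)) % n
      have hbv : (b:ℕ) = ((a:ℕ) + kf) % n := by
        rw [hb, Option.some_inj] at h1; rw [h1]
      rw [hbv, ← Nat.add_assoc]
      conv_rhs => rw [Nat.add_mod]
      conv_lhs => rw [Nat.add_mod]
      simp [Nat.mod_mod_of_dvd]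
  · intro a b c d hab hc hd
    rw [pmul_apply] at hc hd
    rcases hfa : f a with _ | a' <;> rw [hfa] at hc
    · simp at hc
    rcases hfb : f b with _ | b' <;> rw [hfb] at hd
    · simp at hd
    rw [Option.bind_some] at hc hd
    exact hoh a' b' c d (hof a b a' b' hab hfa hfb) hc hd

lemma xmap_mem_OCIn {n : ℕ} : xmap n ∈ OCIn n := by
  constructor
  · refine ⟨1, fun a ha => ?_⟩
    rw [xmap_apply] at ha ⊢
    split at ha
    · next h =>
      rw [dif_pos h, pow_one]
      show _ = some (finRotate n a)
      congr 1; ext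
      rw [finRotate_val, Nat.mod_eq_of_lt h]
    · simp at ha
  · intro a b c d hab hc hd
    rw [xmap_apply] at hc hd
    split at hc
    · split at hd
      · rw [Option.some_inj] at hc hd
        rw [Fin.le_def] at hab ⊢
        rw [← hc, ← hd]
        show (a:ℕ) + 1 ≤ (b:ℕ) + 1
        omega
      · exact absurd hd (by simp)
    · exact absurd hc (by simp)

lemma ymap_mem_OCIn {n : ℕ} : ymap n ∈ OCIn n := by
  constructor
  · refine ⟨n - 1, fun a ha => ?_⟩
    unfold ymap at ha ⊢
    split at ha
    · next h =>
      rw [if_pos h, gpow_apply, Option.some_inj]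
      ext
      show (a:ℕ) - 1 = ((a:ℕ) + (n-1)) % n
      have h2 := a.isLt
      rw [Nat.mod_eq_sub_mod (by omega), Nat.mod_eq_of_lt (by omega)]
      omega
    · simp at ha
  · intro a b c d hab hc hd
    unfold ymap at hc hd
    split at hc
    · split at hd
      · rw [Option.some_inj] at hc hd
        rw [Fin.le_def] at hab ⊢
        rw [← hc, ← hd]
        show (a:ℕ) - 1 ≤ (b:ℕ) - 1
        omega
      · exact absurd hd (by simp)
    · exact absurd hc (by simp)

lemma emap_mem_OCIn {n i : ℕ} : emap n i ∈ OCIn n := by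
  constructor
  · refine ⟨0, fun a ha => ?_⟩
    unfold emap at ha ⊢
    rw [pow_zero, pone_apply]
    by_cases h : (a:ℕ) + 1 = i
    · rw [if_pos h] at ha; simp at ha
    · rw [if_neg h]
  · intro a b c d hab hc hd
    unfold emap at hc hd
    split at hc
    · exact absurd hc (by simp)
    · split at hd
      · exact absurd hd (by simp)
      · rw [Option.some_inj] at hc hd
        rw [← hc, ← hd]; exact hab

/-- structure theorem for elements of OCIn -/
lemma struct {n : ℕ} {f : PMap n} (hf : f ∈ OCIn n) (hn : 1 ≤ n) :
    ∃ k, k < n ∧ ((∀ a b : Fin n, f a = some b → (b:ℕ) = (a:ℕ) + k) ∨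
      (∀ a b : Fin n, f a = some b → (b:ℕ) + n = (a:ℕ) + k)) := by
  obtain ⟨⟨k, hk⟩, ho⟩ := hf
  refine ⟨k % n, Nat.mod_lt _ hn, ?_⟩
  have hval : ∀ a b : Fin n, f a = some b → (b:ℕ) = ((a:ℕ) + k % n) % n := by
    intro a b hab
    have := hk a (by rw [hab]; simp)
    rw [hab, gpow_apply, Option.some_inj] at this
    rw [this]
    show ((a:ℕ) + k) % n = _
    conv_lhs => rw [Nat.add_mod]
    conv_rhs => rw [Nat.add_mod]
    simp [Nat.mod_mod_of_dvd]
  by_cases hw : ∃ a b : Fin n, f a = some b ∧ n ≤ (a:ℕ) + k % n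
  · right
    obtain ⟨a0, b0, hab0, hw0⟩ := hw
    have hb0 : (b0:ℕ) = (a0:ℕ) + k % n - n := by
      rw [hval a0 b0 hab0, Nat.mod_eq_sub_mod hw0,
        Nat.mod_eq_of_lt (by have := a0.isLt; have := Nat.mod_lt k hn; omega)]
    intro a b hab
    rcases Nat.lt_or_ge ((a:ℕ) + k % n) n with h | h
    · -- a is unwrapped, a0 wrapped : contradiction with order preservation
      exfalso
      have hb : (b:ℕ) = (a:ℕ) + k % n := by rw [hval a b hab, Nat.mod_eq_of_lt h]
      have halt : (a:ℕ) < (a0:ℕ) := by omega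
      have := ho a a0 b b0 (by rw [Fin.le_def]; omega) hab hab0
      rw [Fin.le_def] at this
      have hk1 : 1 ≤ k % n := by have := a0.isLt; omega
      omega
    · rw [hval a b hab, Nat.mod_eq_sub_mod h,
        Nat.mod_eq_of_lt (by have := a.isLt; have := Nat.mod_lt k hn; omega)]
      have := a.isLt; omega
  · left
    push_neg at hw
    intro a b hab
    rw [hval a b hab, Nat.mod_eq_of_lt (hw a b hab)]

lemma OCIn_inj {n : ℕ} {f : PMap n} (hf : f ∈ OCIn n) {a a' b : Fin n}
    (h1 : f a = some b) (h2 : f a' = some b) : a = a' := by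
  have hn : 1 ≤ n := a.pos
  obtain ⟨k, -, hd | hd⟩ := struct hf hn
  · have := hd a b h1; have := hd a' b h2; ext; omega
  · have := hd a b h1; have := hd a' b h2; ext; omega

-- cardinality helpers
lemma card_filter_lt (n m : ℕ) (hm : m ≤ n) :
    ((Finset.univ : Finset (Fin n)).filter (fun a : Fin n => (a:ℕ) < m)).card = m := by
  conv_rhs => rw [← Finset.card_range m]
  refine Finset.card_bij (fun a _ => (a : ℕ)) ?_ ?_ ?_
  · intro a ha
    rw [Finset.mem_filter] at ha
    exact Finset.mem_range.mpr ha.2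
  · intro a ha a' ha' hh
    exact Fin.ext hh
  · intro c hc
    rw [Finset.mem_range] at hc
    exact ⟨⟨c, lt_of_lt_of_le hc hm⟩, Finset.mem_filter.mpr ⟨Finset.mem_univ _, hc⟩, rfl⟩

lemma card_filter_ge (n m : ℕ) (hm : m ≤ n) :
    ((Finset.univ : Finset (Fin n)).filter (fun a : Fin n => m ≤ (a:ℕ))).card = n - m := by
  have h1 := Finset.card_filter_add_card_filter_not
    (s := (Finset.univ : Finset (Fin n))) (p := fun a : Fin n => (a:ℕ) < m)
  rw [Finset.card_univ, Fintype.card_fin, card_filter_lt n m hm] at h1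
  have h2 : (Finset.univ.filter (fun a : Fin n => ¬ (a:ℕ) < m))
      = Finset.univ.filter (fun a : Fin n => m ≤ (a:ℕ)) := by
    apply Finset.filter_congr
    intro a _
    simp [Nat.not_lt]
  rw [h2] at h1
  omega

def fdom {n : ℕ} (f : PMap n) : Finset (Fin n) :=
  Finset.univ.filter (fun a => f a ≠ none)

lemma pid_insert {n : ℕ} (S : Finset (Fin n)) (a : Fin n) (ha : a ∉ S) :
    pid S = pid (insert a S) * emap n ((a:ℕ) + 1) := by
  funext b
  rw [pmul_apply]
  unfold pid emap
  by_cases hb : b ∈ S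
  · rw [if_pos hb, if_pos (Finset.mem_insert_of_mem hb), Option.bind_some,
      if_neg (by intro hc; exact ha (by rwa [show b = a from Fin.ext (by omega)] at hb))]
  · by_cases hba : b = a
    · subst hba
      rw [if_neg hb, if_pos (Finset.mem_insert_self b S), Option.bind_some, if_pos rfl]
    · rw [if_neg hb, if_neg (by
        intro hc
        rcases Finset.mem_insert.mp hc with h | h
        · exact hba h
        · exact hb h), Option.bind_none]

lemma pid_mem {n : ℕ} (M : Submonoid (PMap n))
    (he : ∀ a : Fin n, emap n ((a:ℕ) + 1) ∈ M) (S : Finset (Fin n)) : pid S ∈ M := by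
  have key : ∀ (m : ℕ) (S : Finset (Fin n)), Sᶜ.card = m → pid S ∈ M := by
    intro m
    induction m with
    | zero =>
      intro S hS
      have : S = Finset.univ := by
        have : Sᶜ = ∅ := Finset.card_eq_zero.mp hS
        rwa [Finset.compl_eq_empty_iff] at this
      rw [this, pid_univ]
      exact M.one_mem
    | succ m ih =>
      intro S hS
      have hne : Sᶜ.Nonempty := Finset.card_pos.mp (by omega)
      obtain ⟨a, ha⟩ := hne
      rw [Finset.mem_compl] at ha
      rw [pid_insert S a ha]
      refine M.mul_mem (ih _ ?_) (he a)
      rw [Finset.compl_insert, Finset.card_erase_of_mem (Finset.mem_compl.mpr ha), hS]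
      omega
  exact key _ S rfl

lemma e_one_eq {n : ℕ} : emap n 1 = ymap n * xmap n := by
  funext a
  rw [pmul_apply]
  unfold emap ymap
  by_cases h : 1 ≤ (a:ℕ)
  · rw [if_neg (by omega), if_pos h, Option.bind_some, xmap_apply,
      dif_pos (show ((a:ℕ) - 1) + 1 < n from by have := a.isLt; omega), Option.some_inj]
    ext; show (a:ℕ) = (a:ℕ) - 1 + 1; omega
  · rw [if_pos (by omega), if_neg h, Option.bind_none]

lemma e_n_eq {n : ℕ} : emap n n = xmap n * ymap n := by
  funext a
  rw [pmul_apply, xmap_apply]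
  unfold emap ymap
  by_cases h : (a:ℕ) + 1 < n
  · rw [if_neg (by omega), dif_pos h, Option.bind_some,
      if_pos (by show 1 ≤ (a:ℕ) + 1; omega), Option.some_inj]
    ext; show (a:ℕ) = (a:ℕ) + 1 - 1; omega
  · rw [if_pos (by have := a.isLt; omega), dif_neg h, Option.bind_none]

lemma eq_pid_mul_xpow {n : ℕ} {f : PMap n} (k : ℕ)
    (hd : ∀ a b : Fin n, f a = some b → (b:ℕ) = (a:ℕ) + k) :
    f = pid (fdom f) * (xmap n) ^ k := by
  funext a
  rw [pmul_apply]
  unfold pid fdom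
  rcases hfa : f a with _ | b
  · rw [if_neg (by simp [hfa]), Option.bind_none]
  · rw [if_pos (by simp [hfa]), Option.bind_some, xpow_apply,
      dif_pos (show (a:ℕ) + k < n from by rw [← hd a b hfa]; exact b.isLt), Option.some_inj]
    ext; exact (hd a b hfa)

lemma eq_pid_mul_ypow {n : ℕ} {f : PMap n} (k : ℕ) (hk : k < n)
    (hd : ∀ a b : Fin n, f a = some b → (b:ℕ) + n = (a:ℕ) + k) :
    f = pid (fdom f) * (ymap n) ^ (n - k) := by
  funext a
  rw [pmul_apply]
  unfold pid fdom
  rcases hfa : f a with _ | b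
  · rw [if_neg (by simp [hfa]), Option.bind_none]
  · have hb := hd a b hfa
    rw [if_pos (by simp [hfa]), Option.bind_some, ypow_apply,
      dif_pos (show n - k ≤ (a:ℕ) from by omega), Option.some_inj]
    ext; show (b:ℕ) = (a:ℕ) - (n - k); omega

noncomputable instance (n : ℕ) : DecidableEq (PMap n) := Classical.decEq _

noncomputable def F (n : ℕ) : Finset (PMap n) :=
  {xmap n, ymap n} ∪ (Finset.Icc 2 (n-1)).image (emap n)

lemma xmap_apply_zero {n : ℕ} (hn : 2 ≤ n) :
    xmap n ⟨0, by omega⟩ = some ⟨1, by omega⟩ := by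
  rw [xmap_apply, dif_pos (by show 0 + 1 < n; omega)]

lemma ymap_apply_zero {n : ℕ} (hn : 1 ≤ n) : ymap n ⟨0, by omega⟩ = none := by
  unfold ymap; rw [if_neg (by show ¬ (1 ≤ 0); omega)]

lemma emap_apply_zero {n : ℕ} (hn : 1 ≤ n) {j : ℕ} (hj : 2 ≤ j) :
    emap n j ⟨0, by omega⟩ = some ⟨0, by omega⟩ := by
  unfold emap; rw [if_neg (by show ¬ (0 + 1 = j); omega)]

lemma xmap_ne_ymap {n : ℕ} (hn : 2 ≤ n) : xmap n ≠ ymap n := by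
  intro h
  have := congrFun h ⟨0, by omega⟩
  rw [xmap_apply_zero hn, ymap_apply_zero (by omega)] at this
  simp at this

lemma emap_ne_xmap {n : ℕ} (hn : 2 ≤ n) {j : ℕ} (hj : 2 ≤ j) : emap n j ≠ xmap n := by
  intro h
  have := congrFun h ⟨0, by omega⟩
  rw [emap_apply_zero (by omega) hj, xmap_apply_zero hn, Option.some_inj, Fin.ext_iff] at this
  simp at this

lemma emap_ne_ymap {n : ℕ} (hn : 2 ≤ n) {j : ℕ} (hj : 2 ≤ j) : emap n j ≠ ymap n := by
  intro h
  have := congrFun h ⟨0, by omega⟩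
  rw [emap_apply_zero (by omega) hj, ymap_apply_zero (by omega)] at this
  simp at this

lemma emap_injOn {n : ℕ} : Set.InjOn (emap n) (Finset.Icc 2 (n-1)) := by
  intro i hi j hj hij
  simp only [Finset.coe_Icc, Set.mem_Icc] at hi hj
  have hn : 3 ≤ n := by omega
  have := congrFun hij ⟨i - 1, by omega⟩
  unfold emap at this
  rw [if_pos (by show i - 1 + 1 = i; omega)] at this
  by_contra hne
  rw [if_neg (by show ¬ (i - 1 + 1 = j); omega)] at this
  simp at this

lemma card_F {n : ℕ} (hn : 1 ≤ n) : (F n).card = n := by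
  unfold F
  rcases eq_or_lt_of_le hn with h1 | h2
  · have : n - 1 = 0 := by omega
    rw [this]
    have hIcc : Finset.Icc 2 0 = (∅ : Finset ℕ) := by decide
    rw [hIcc, Finset.image_empty, Finset.union_empty]
    have hxy : ymap n = xmap n := by
      funext a
      have ha : (a:ℕ) = 0 := by omega
      rw [xmap_apply, dif_neg (by omega)]
      unfold ymap
      rw [if_neg (by omega)]
    rw [hxy, Finset.pair_eq_singleton, Finset.card_singleton]
    omega
  · have hn2 : 2 ≤ n := h2
    rw [Finset.card_union_of_disjoint, Finset.card_pair (xmap_ne_ymap hn2),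
      Finset.card_image_of_injOn emap_injOn, Nat.card_Icc]
    · omega
    · rw [Finset.disjoint_right]
      intro f hf hmem
      rw [Finset.mem_image] at hf
      obtain ⟨j, hj, rfl⟩ := hf
      rw [Finset.mem_Icc] at hj
      rcases Finset.mem_insert.mp hmem with h | h
      · exact emap_ne_xmap hn2 (by omega) h
      · exact emap_ne_ymap hn2 (by omega) (Finset.mem_singleton.mp h)

def OCImon (n : ℕ) : Submonoid (PMap n) where
  carrier := OCIn n
  one_mem' := one_mem_OCIn
  mul_mem' := fun hf hh => mul_mem_OCIn hf hh

lemma xmap_mem_F {n : ℕ} : xmap n ∈ F n :=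
  Finset.mem_union_left _ (Finset.mem_insert_self _ _)

lemma ymap_mem_F {n : ℕ} : ymap n ∈ F n :=
  Finset.mem_union_left _ (Finset.mem_insert_of_mem (Finset.mem_singleton_self _))

lemma emap_mem_closure_F {n : ℕ} (a : Fin n) :
    emap n ((a:ℕ) + 1) ∈ Submonoid.closure (↑(F n) : Set (PMap n)) := by
  have hx : xmap n ∈ Submonoid.closure (↑(F n) : Set (PMap n)) :=
    Submonoid.subset_closure (by exact_mod_cast xmap_mem_F)
  have hy : ymap n ∈ Submonoid.closure (↑(F n) : Set (PMap n)) :=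
    Submonoid.subset_closure (by exact_mod_cast ymap_mem_F)
  have han := a.isLt
  by_cases h1 : (a:ℕ) + 1 = 1
  · rw [h1, e_one_eq]
    exact mul_mem hy hx
  · by_cases h2 : (a:ℕ) + 1 = n
    · rw [h2, e_n_eq]
      exact mul_mem hx hy
    · refine Submonoid.subset_closure ?_
      have : emap n ((a:ℕ) + 1) ∈ F n := by
        apply Finset.mem_union_right
        rw [Finset.mem_image]
        exact ⟨(a:ℕ) + 1, Finset.mem_Icc.mpr ⟨by omega, by omega⟩, rfl⟩
      exact_mod_cast this

lemma closure_F {n : ℕ} (hn : 1 ≤ n) :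
    (Submonoid.closure (↑(F n) : Set (PMap n)) : Set (PMap n)) = OCIn n := by
  apply le_antisymm
  · intro f hf
    refine Submonoid.closure_induction (motive := fun f _ => f ∈ OCImon n) ?_ ?_ ?_ hf
    · intro u hu
      rcases Finset.mem_union.mp (by exact_mod_cast hu) with h | h
      · rcases Finset.mem_insert.mp h with h | h
        · rw [h]; exact xmap_mem_OCIn
        · rw [Finset.mem_singleton.mp h]; exact ymap_mem_OCIn
      · obtain ⟨j, _, rfl⟩ := Finset.mem_image.mp h
        exact emap_mem_OCIn
    · exact one_mem_OCIn
    · intro u v _ _ hu hv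
      exact mul_mem_OCIn hu hv
  · intro f hf
    obtain ⟨k, hk, hd | hd⟩ := struct hf hn
    · rw [eq_pid_mul_xpow k hd]
      exact mul_mem (pid_mem _ emap_mem_closure_F _)
        (pow_mem (Submonoid.subset_closure (by exact_mod_cast xmap_mem_F)) k)
    · rw [eq_pid_mul_ypow k hk hd]
      exact mul_mem (pid_mem _ emap_mem_closure_F _)
        (pow_mem (Submonoid.subset_closure (by exact_mod_cast ymap_mem_F)) (n - k))

def NonPos {n : ℕ} (f : PMap n) : Prop := ∀ a b : Fin n, f a = some b → (b:ℕ) ≤ (a:ℕ)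
def NonNeg {n : ℕ} (f : PMap n) : Prop := ∀ a b : Fin n, f a = some b → (a:ℕ) ≤ (b:ℕ)

lemma nonPos_mul {n : ℕ} {f h : PMap n} (hf : NonPos f) (hh : NonPos h) : NonPos (f * h) := by
  intro a c habc
  rw [pmul_apply] at habc
  rcases hfa : f a with _ | b
  · rw [hfa] at habc; simp at habc
  · rw [hfa, Option.bind_some] at habc
    exact le_trans (hh b c habc) (hf a b hfa)

lemma nonNeg_mul {n : ℕ} {f h : PMap n} (hf : NonNeg f) (hh : NonNeg h) : NonNeg (f * h) := by
  intro a c habc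
  rw [pmul_apply] at habc
  rcases hfa : f a with _ | b
  · rw [hfa] at habc; simp at habc
  · rw [hfa, Option.bind_some] at habc
    exact le_trans (hf a b hfa) (hh b c habc)

lemma fdom_mul_subset_left {n : ℕ} (f h : PMap n) : fdom (f * h) ⊆ fdom f := by
  intro a ha
  rw [fdom, Finset.mem_filter] at ha ⊢
  refine ⟨Finset.mem_univ _, ?_⟩
  intro hfa
  rw [pmul_apply, hfa] at ha
  exact ha.2 rfl

lemma card_fdom_mul_le_right {n : ℕ} {f : PMap n} (hf : f ∈ OCIn n) (h : PMap n) :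
    (fdom (f * h)).card ≤ (fdom h).card := by
  apply Finset.card_le_card_of_injOn (fun a => (f a).getD a)
  · intro a ha
    rw [Finset.mem_coe, fdom, Finset.mem_filter] at ha ⊢
    refine ⟨Finset.mem_univ _, ?_⟩
    have := ha.2
    rw [pmul_apply] at this
    rcases hfa : f a with _ | b
    · rw [hfa] at this; simp at this
    · rw [hfa] at this
      rw [Option.bind_some] at this
      simpa [hfa] using this
  · intro a ha a' ha' heq
    rw [Finset.mem_coe, fdom, Finset.mem_filter] at ha ha'
    have h2 := ha.2; have h2' := ha'.2
    rw [pmul_apply] at h2 h2'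
    rcases hfa : f a with _ | b
    · rw [hfa] at h2; simp at h2
    rcases hfa' : f a' with _ | b'
    · rw [hfa'] at h2'; simp at h2'
    have heq' : (f a).getD a = (f a').getD a' := heq
    rw [hfa, hfa'] at heq'
    simp only [Option.getD_some] at heq'
    subst heq'
    exact OCIn_inj hf hfa hfa'

lemma big_notNonPos {n : ℕ} {f : PMap n} (hf : f ∈ OCIn n) (h1 : ¬ NonPos f)
    (h2 : n ≤ (fdom f).card + 1) : f = xmap n := by
  rw [NonPos] at h1
  push_neg at h1
  obtain ⟨a0, b0, hab0, hgt⟩ := h1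
  have hn : 1 ≤ n := a0.pos
  obtain ⟨k, hk, hd | hd⟩ := struct hf hn
  · -- unwrapped, shift k ≥ 1
    have hk1 : 1 ≤ k := by have := hd a0 b0 hab0; omega
    have hsub : fdom f ⊆ Finset.univ.filter (fun a : Fin n => (a:ℕ) < n - k) := by
      intro a ha
      rw [fdom, Finset.mem_filter] at ha
      rw [Finset.mem_filter]
      refine ⟨Finset.mem_univ _, ?_⟩
      rcases hfa : f a with _ | b
      · exact absurd hfa ha.2
      · have := hd a b hfa
        have := b.isLt
        omega
    have hcard := Finset.card_le_card hsub
    rw [card_filter_lt n (n - k) (by omega)] at hcard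
    have hkeq : k = 1 := by omega
    subst hkeq
    have hdomeq : fdom f = Finset.univ.filter (fun a : Fin n => (a:ℕ) < n - 1) :=
      Finset.eq_of_subset_of_card_le hsub (by rw [card_filter_lt n (n-1) (by omega)]; omega)
    funext a
    rw [xmap_apply]
    by_cases ha : (a:ℕ) + 1 < n
    · rw [dif_pos ha]
      have hmem : a ∈ fdom f := by
        rw [hdomeq, Finset.mem_filter]
        exact ⟨Finset.mem_univ _, by omega⟩
      rw [fdom, Finset.mem_filter] at hmem
      rcases hfa : f a with _ | b
      · exact absurd hfa hmem.2
      · rw [Option.some_inj]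
        ext
        rw [hd a b hfa]
    · rw [dif_neg ha]
      by_contra hne
      have hmem : a ∈ fdom f := by
        rw [fdom, Finset.mem_filter]
        exact ⟨Finset.mem_univ _, hne⟩
      rw [hdomeq, Finset.mem_filter] at hmem
      omega
  · exfalso
    have := hd a0 b0 hab0
    omega

lemma big_notNonNeg {n : ℕ} {f : PMap n} (hf : f ∈ OCIn n) (h1 : ¬ NonNeg f)
    (h2 : n ≤ (fdom f).card + 1) : f = ymap n := by
  rw [NonNeg] at h1
  push_neg at h1
  obtain ⟨a0, b0, hab0, hgt⟩ := h1
  have hn : 1 ≤ n := a0.pos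
  obtain ⟨k, hk, hd | hd⟩ := struct hf hn
  · exfalso
    have := hd a0 b0 hab0
    omega
  · -- wrapped, shift k, k = n-1
    have hsub : fdom f ⊆ Finset.univ.filter (fun a : Fin n => n - k ≤ (a:ℕ)) := by
      intro a ha
      rw [fdom, Finset.mem_filter] at ha
      rw [Finset.mem_filter]
      refine ⟨Finset.mem_univ _, ?_⟩
      rcases hfa : f a with _ | b
      · exact absurd hfa ha.2
      · have := hd a b hfa
        omega
    have hcard := Finset.card_le_card hsub
    rw [card_filter_ge n (n - k) (by omega)] at hcard
    have hkeq : k = n - 1 := by omega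
    subst hkeq
    have hdomeq : fdom f = Finset.univ.filter (fun a : Fin n => n - (n-1) ≤ (a:ℕ)) :=
      Finset.eq_of_subset_of_card_le hsub (by rw [card_filter_ge n (n - (n-1)) (by omega)]; omega)
    funext a
    unfold ymap
    by_cases ha : 1 ≤ (a:ℕ)
    · rw [if_pos ha]
      have hmem : a ∈ fdom f := by
        rw [hdomeq, Finset.mem_filter]
        exact ⟨Finset.mem_univ _, by omega⟩
      rw [fdom, Finset.mem_filter] at hmem
      rcases hfa : f a with _ | b
      · exact absurd hfa hmem.2
      · rw [Option.some_inj]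
        ext
        have := hd a b hfa
        show (b:ℕ) = (a:ℕ) - 1
        omega
    · rw [if_neg ha]
      by_contra hne
      have hmem : a ∈ fdom f := by
        rw [fdom, Finset.mem_filter]
        exact ⟨Finset.mem_univ _, hne⟩
      rw [hdomeq, Finset.mem_filter] at hmem
      omega

lemma interior_e {n i : ℕ} (h2i : 2 ≤ i) (hin : i ≤ n - 1) {f h : PMap n}
    (hf : f ∈ OCIn n) (hh : h ∈ OCIn n) (heq : f * h = emap n i) :
    f = emap n i ∨ h = emap n i := by
  have hn3 : 3 ≤ n := by omega
  have key : ∀ a : Fin n, (a:ℕ) + 1 ≠ i → ∃ b, f a = some b ∧ h b = some a := by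
    intro a ha
    have := congrFun heq a
    rw [pmul_apply] at this
    unfold emap at this
    rw [if_neg ha] at this
    rcases hfa : f a with _ | b
    · rw [hfa] at this; simp at this
    · rw [hfa, Option.bind_some] at this
      exact ⟨b, rfl, this⟩
  obtain ⟨k, hk, hd | hd⟩ := struct hf (by omega)
  · -- unwrapped; first show k = 0
    have hlast : ((⟨n-1, by omega⟩ : Fin n) : ℕ) + 1 ≠ i := by
      show n - 1 + 1 ≠ i; omega
    obtain ⟨b, hb, -⟩ := key _ hlast
    have hk0 : k = 0 := by
      have h1 := hd _ b hb
      have h2 := b.isLt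
      rw [show ((⟨n-1, by omega⟩ : Fin n) : ℕ) = n - 1 from rfl] at h1
      omega
    subst hk0
    have hfix : ∀ a b : Fin n, f a = some b → b = a := by
      intro a b hab
      have := hd a b hab
      ext
      omega
    have hh0 := congrFun heq ⟨i - 1, by omega⟩
    rw [pmul_apply] at hh0
    unfold emap at hh0
    rw [if_pos (by show i - 1 + 1 = i; omega)] at hh0
    rcases hf0 : f ⟨i - 1, by omega⟩ with _ | b
    · left
      funext a
      unfold emap
      by_cases ha : (a:ℕ) + 1 = i
      · rw [if_pos ha]
        have : a = (⟨i - 1, by omega⟩ : Fin n) := by ext; show (a:ℕ) = i - 1; omega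
        rw [this, hf0]
      · rw [if_neg ha]
        obtain ⟨b, hb, -⟩ := key a ha
        rw [hb, Option.some_inj]
        exact hfix a b hb
    · right
      rw [hf0, Option.bind_some] at hh0
      have hbeq : b = (⟨i - 1, by omega⟩ : Fin n) := hfix _ b hf0
      rw [hbeq] at hh0
      funext a
      unfold emap
      by_cases ha : (a:ℕ) + 1 = i
      · rw [if_pos ha]
        have : a = (⟨i - 1, by omega⟩ : Fin n) := by ext; show (a:ℕ) = i - 1; omega
        rw [this, hh0]
      · rw [if_neg ha]
        obtain ⟨b', hb'f, hb'⟩ := key a ha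
        have hba : b' = a := hfix a b' hb'f
        rw [hba] at hb'
        exact hb'
  · -- wrapped : contradiction via a = 0
    exfalso
    have h0 : ((⟨0, by omega⟩ : Fin n) : ℕ) + 1 ≠ i := by show 0 + 1 ≠ i; omega
    obtain ⟨b, hb, -⟩ := key _ h0
    have h1 := hd _ b hb
    have h2 := b.isLt
    rw [show ((⟨0, by omega⟩ : Fin n) : ℕ) = 0 from rfl] at h1
    omega

lemma fdom_xmap_card {n : ℕ} (hn : 1 ≤ n) : (fdom (xmap n)).card = n - 1 := by
  have : fdom (xmap n) = Finset.univ.filter (fun a : Fin n => (a:ℕ) < n - 1) := by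
    ext a
    rw [fdom, Finset.mem_filter, Finset.mem_filter]
    constructor
    · rintro ⟨-, h⟩
      refine ⟨Finset.mem_univ _, ?_⟩
      rw [xmap_apply] at h
      by_contra hc
      rw [dif_neg (by omega)] at h
      exact h rfl
    · rintro ⟨-, h⟩
      refine ⟨Finset.mem_univ _, ?_⟩
      rw [xmap_apply, dif_pos (by omega)]
      simp
  rw [this, card_filter_lt n (n-1) (by omega)]

lemma fdom_ymap_card {n : ℕ} (hn : 1 ≤ n) : (fdom (ymap n)).card = n - 1 := by
  have : fdom (ymap n) = Finset.univ.filter (fun a : Fin n => 1 ≤ (a:ℕ)) := by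
    ext a
    rw [fdom, Finset.mem_filter, Finset.mem_filter]
    unfold ymap
    constructor
    · rintro ⟨-, h⟩
      refine ⟨Finset.mem_univ _, ?_⟩
      by_contra hc
      rw [if_neg hc] at h
      exact h rfl
    · rintro ⟨-, h⟩
      refine ⟨Finset.mem_univ _, ?_⟩
      rw [if_pos h]
      simp
  rw [this, card_filter_ge n 1 hn]

lemma xmap_mem_of_gen {n : ℕ} (hn2 : 2 ≤ n) {X : Set (PMap n)}
    (hX : (Submonoid.closure X : Set (PMap n)) = OCIn n) : xmap n ∈ X := by
  by_contra hx
  set M : Submonoid (PMap n) :=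
    { carrier := {f | f ∈ OCIn n ∧ (NonPos f ∨ (fdom f).card + 2 ≤ n)}
      one_mem' := ⟨one_mem_OCIn, Or.inl (fun a b hb => by
        rw [pone_apply, Option.some_inj] at hb
        rw [hb])⟩
      mul_mem' := by
        rintro f h ⟨hfO, hfP⟩ ⟨hhO, hhP⟩
        refine ⟨mul_mem_OCIn hfO hhO, ?_⟩
        rcases hfP with hf1 | hf2
        · rcases hhP with hh1 | hh2
          · exact Or.inl (nonPos_mul hf1 hh1)
          · right
            have := card_fdom_mul_le_right hfO h
            omega
        · right
          have := Finset.card_le_card (fdom_mul_subset_left f h)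
          omega } with hM
  have hXsub : X ⊆ OCIn n := by rw [← hX]; exact Submonoid.subset_closure
  have hXM : X ⊆ (M : Set (PMap n)) := by
    intro u hu
    refine ⟨hXsub hu, ?_⟩
    by_contra hP
    push_neg at hP
    have := big_notNonPos (hXsub hu) hP.1 (by omega)
    rw [this] at hu
    exact hx hu
  have hxc : xmap n ∈ Submonoid.closure X := by
    rw [← SetLike.mem_coe, hX]
    exact xmap_mem_OCIn
  have hxM : xmap n ∈ M := Submonoid.closure_le.mpr hXM hxc
  obtain ⟨-, hP | hP⟩ := hxM
  · have := hP ⟨0, by omega⟩ ⟨1, by omega⟩ (xmap_apply_zero hn2)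
    simp at this
  · rw [fdom_xmap_card (by omega)] at hP
    omega

lemma ymap_mem_of_gen {n : ℕ} (hn2 : 2 ≤ n) {X : Set (PMap n)}
    (hX : (Submonoid.closure X : Set (PMap n)) = OCIn n) : ymap n ∈ X := by
  by_contra hx
  set M : Submonoid (PMap n) :=
    { carrier := {f | f ∈ OCIn n ∧ (NonNeg f ∨ (fdom f).card + 2 ≤ n)}
      one_mem' := ⟨one_mem_OCIn, Or.inl (fun a b hb => by
        rw [pone_apply, Option.some_inj] at hb
        rw [hb])⟩
      mul_mem' := by
        rintro f h ⟨hfO, hfP⟩ ⟨hhO, hhP⟩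
        refine ⟨mul_mem_OCIn hfO hhO, ?_⟩
        rcases hfP with hf1 | hf2
        · rcases hhP with hh1 | hh2
          · exact Or.inl (nonNeg_mul hf1 hh1)
          · right
            have := card_fdom_mul_le_right hfO h
            omega
        · right
          have := Finset.card_le_card (fdom_mul_subset_left f h)
          omega } with hM
  have hXsub : X ⊆ OCIn n := by rw [← hX]; exact Submonoid.subset_closure
  have hXM : X ⊆ (M : Set (PMap n)) := by
    intro u hu
    refine ⟨hXsub hu, ?_⟩
    by_contra hP
    push_neg at hP
    have := big_notNonNeg (hXsub hu) hP.1 (by omega)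
    rw [this] at hu
    exact hx hu
  have hyc : ymap n ∈ Submonoid.closure X := by
    rw [← SetLike.mem_coe, hX]
    exact ymap_mem_OCIn
  have hyM : ymap n ∈ M := Submonoid.closure_le.mpr hXM hyc
  obtain ⟨-, hP | hP⟩ := hyM
  · have h1 : ymap n ⟨1, by omega⟩ = some ⟨0, by omega⟩ := by
      unfold ymap
      rw [if_pos (by show 1 ≤ 1; omega), Option.some_inj]
      rfl
    have := hP ⟨1, by omega⟩ ⟨0, by omega⟩ h1
    simp at this
  · rw [fdom_ymap_card (by omega)] at hP
    omega

lemma emap_mem_of_gen {n j : ℕ} (h2j : 2 ≤ j) (hjn : j ≤ n - 1) {X : Set (PMap n)}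
    (hX : (Submonoid.closure X : Set (PMap n)) = OCIn n) : emap n j ∈ X := by
  have hn3 : 3 ≤ n := by omega
  by_contra hx
  set M : Submonoid (PMap n) :=
    { carrier := {f | f ∈ OCIn n ∧ f ≠ emap n j}
      one_mem' := ⟨one_mem_OCIn, by
        intro hcon
        have := congrFun hcon ⟨j - 1, by omega⟩
        rw [pone_apply] at this
        unfold emap at this
        rw [if_pos (by show j - 1 + 1 = j; omega)] at this
        simp at this⟩
      mul_mem' := by
        rintro f h ⟨hfO, hfP⟩ ⟨hhO, hhP⟩
        refine ⟨mul_mem_OCIn hfO hhO, ?_⟩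
        intro hcon
        rcases interior_e h2j hjn hfO hhO hcon with hcase | hcase
        · exact hfP hcase
        · exact hhP hcase } with hM
  have hXsub : X ⊆ OCIn n := by rw [← hX]; exact Submonoid.subset_closure
  have hXM : X ⊆ (M : Set (PMap n)) := by
    intro u hu
    refine ⟨hXsub hu, ?_⟩
    intro hcon
    rw [hcon] at hu
    exact hx hu
  have hec : emap n j ∈ Submonoid.closure X := by
    rw [← SetLike.mem_coe, hX]
    exact emap_mem_OCIn
  have heM : emap n j ∈ M := Submonoid.closure_le.mpr hXM hec
  exact heM.2 rfl


/-- For `n ≥ 1`, the monoid `OCI_n` has rank `n`: some set of `n`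
elements generates it, and every generating set has at least `n` elements. -/
theorem OCIn.rank (n : ℕ) (hn : 1 ≤ n) :
    (∃ X : Set (PMap n), X.ncard = n ∧ (Submonoid.closure X : Set (PMap n)) = OCIn n) ∧
    (∀ X : Set (PMap n), (Submonoid.closure X : Set (PMap n)) = OCIn n → n ≤ X.ncard) := by
  constructor
  · exact ⟨(↑(F n) : Set (PMap n)), by rw [Set.ncard_coe_finset, card_F hn], closure_F hn⟩
  · intro X hX
    by_cases hn2 : 2 ≤ n
    · have hsub : (↑(F n) : Set (PMap n)) ⊆ X := by
        intro u hu
        rw [Finset.mem_coe] at hu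
        unfold F at hu
        rcases Finset.mem_union.mp hu with h | h
        · rcases Finset.mem_insert.mp h with h | h
          · rw [h]; exact xmap_mem_of_gen hn2 hX
          · rw [Finset.mem_singleton.mp h]; exact ymap_mem_of_gen hn2 hX
        · obtain ⟨j, hj, rfl⟩ := Finset.mem_image.mp h
          rw [Finset.mem_Icc] at hj
          exact emap_mem_of_gen hj.1 hj.2 hX
      calc n = (↑(F n) : Set (PMap n)).ncard := by rw [Set.ncard_coe_finset, card_F hn]
        _ ≤ X.ncard := Set.ncard_le_ncard hsub (Set.toFinite X)
    · obtain rfl : n = 1 := by omega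
      rcases Set.eq_empty_or_nonempty X with rfl | hne
      · exfalso
        rw [Submonoid.closure_empty] at hX
        have hx1 : xmap 1 ∈ ((⊥ : Submonoid (PMap 1)) : Set (PMap 1)) := by
          rw [hX]
          exact xmap_mem_OCIn
        rw [SetLike.mem_coe, Submonoid.mem_bot] at hx1
        have := congrFun hx1 ⟨0, by omega⟩
        rw [xmap_apply, dif_neg (by omega), pone_apply] at this
        simp at this
      · have : 0 < X.ncard := (Set.ncard_pos (Set.toFinite X)).mpr hne
        omega
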